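/- arXiv:2303.07347 — 3 statements merged into one kernel-verified Lean document; each statement's English description precedes it below -/
import Mathlib

section
/- Let E be a real inner product space and let a, b ∈ E be linearly independent (so a + t•b ≠ 0 for every real t). Fix y ∈ ℝ. Then the angle x ↦ ∠(a + x•b, a + y•b) is strictly decreasing for x ≤ y and strictly increasing for x ≥ y; that is, for all x₁ < x₂ ≤ y one has ∠(a + x₂•b, a + y•b) < ∠(a + x₁•b, a + y•b), and for all y ≤ x₁ < x₂ one has ∠(a + x₁•b, a + y•b) < ∠(a + x₂•b, a + y•b). -/
/-!
Angles at the origin are additive along segments: if `w` lies on `[v, u]` (all nonzero), then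
`∠(v, u) = ∠(v, w) + ∠(w, u)`. When `x` moves towards `y`, the point `a + x • b` moves along the
segment towards `a + y • b`, so the angle to `a + y • b` drops by `∠(a + x₁ • b, a + x₂ • b)`,
which is positive because linear independence keeps distinct points of the line off a common ray.
-/

open InnerProductGeometry

section

variable {E : Type*} [NormedAddCommGroup E] [InnerProductSpace ℝ E]

namespace InnerProductGeometry

theorem angle_add_angle_of_wbtw {v w u : E} (h : Wbtw ℝ v w u) (hv : v ≠ 0) (hu : u ≠ 0) :
    angle v w + angle w u = angle v u := by
  simpa [EuclideanGeometry.angle] using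
    EuclideanGeometry.angle_add_of_ne_of_ne (p := w) hv.symm hu.symm h

theorem angle_lt_angle_of_wbtw {v w u : E} (h : Wbtw ℝ v w u) (hv : v ≠ 0) (hu : u ≠ 0)
    (hvw : angle v w ≠ 0) : angle w u < angle v u := by
  rw [← angle_add_angle_of_wbtw h hv hu]
  exact lt_add_of_pos_left _ ((angle_nonneg v w).lt_of_ne' hvw)

end InnerProductGeometry

theorem Wbtw.add_smul {x₁ x₂ x₃ : ℝ} (h : Wbtw ℝ x₁ x₂ x₃) (a b : E) :
    Wbtw ℝ (a + x₁ • b) (a + x₂ • b) (a + x₃ • b) := by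
  simpa [AffineMap.lineMap_apply, add_comm] using h.map (AffineMap.lineMap a (a + b))

namespace LinearIndependent

variable {a b : E}

theorem add_smul_ne_zero (h : LinearIndependent ℝ ![a, b]) (t : ℝ) : a + t • b ≠ 0 := by
  intro ht
  simpa using (LinearIndependent.pair_iff.mp h 1 t (by simpa using ht)).1

theorem angle_add_smul_ne_zero (h : LinearIndependent ℝ ![a, b]) {s t : ℝ} (hst : s ≠ t) :
    angle (a + s • b) (a + t • b) ≠ 0 := by
  rw [Ne, angle_eq_zero_iff]
  rintro ⟨-, r, -, hr⟩
  have hcomb : (1 - r) • a + (t - r * s) • b = 0 := by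
    rw [← sub_eq_zero.mpr hr]; module
  obtain ⟨hr1, hrs⟩ := LinearIndependent.pair_iff.mp h _ _ hcomb
  obtain rfl : r = 1 := by linarith
  exact hst (by linarith)

end LinearIndependent

end

theorem angle_strictMono_on_line {E : Type*} [NormedAddCommGroup E] [InnerProductSpace ℝ E]
    {a b : E} (h : LinearIndependent ℝ ![a, b]) (y : ℝ) :
    (∀ x₁ x₂ : ℝ, x₁ < x₂ → x₂ ≤ y →
      angle (a + x₂ • b) (a + y • b) < angle (a + x₁ • b) (a + y • b)) ∧
    (∀ x₁ x₂ : ℝ, y ≤ x₁ → x₁ < x₂ →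
      angle (a + x₁ • b) (a + y • b) < angle (a + x₂ • b) (a + y • b)) := by
  constructor
  · intro x₁ x₂ h₁₂ h₂y
    exact angle_lt_angle_of_wbtw ((Wbtw.of_le_of_le h₁₂.le h₂y).add_smul a b)
      (h.add_smul_ne_zero x₁) (h.add_smul_ne_zero y) (h.angle_add_smul_ne_zero h₁₂.ne)
  · intro x₁ x₂ hy₁ h₁₂
    exact angle_lt_angle_of_wbtw ((Wbtw.of_le_of_le hy₁ h₁₂.le).add_smul a b).symm
      (h.add_smul_ne_zero x₂) (h.add_smul_ne_zero y) (h.angle_add_smul_ne_zero h₁₂.ne')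
end

section
/- Let E be a real inner product space and let a, b ∈ E be linearly independent. Then for all x, y ∈ [0, ∞), ∠(a + x•b, a + y•b) ≤ max (∠(a, a + y•b)) (∠(b, a + y•b)). In other words, for a fixed point a + y•b of the cone {a + t•b : t ≥ 0}, the angle it makes with a + x•b is maximized at the endpoint x = 0 (i.e. at a) or in the limiting direction b. -/
/-!
A point `a + x • b` of the ray lies in the nonnegative cone spanned by `a + y • b` and `a`
when `x ≤ y`, and by `a + y • b` and `b` when `y ≤ x`. Angles add up inside such a cone (the
equality case of the triangle inequality for angles), so, e.g. for `x ≤ y`,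
`∠(a + x • b, a + y • b) = ∠(a, a + y • b) - ∠(a, a + x • b) ≤ ∠(a, a + y • b)`.
-/

open InnerProductGeometry
open scoped NNReal

section Cone

variable {M : Type*} [AddCommGroup M] [Module ℝ M]

theorem add_smul_mem_span_nnreal_base {u v : M} {s t : ℝ} (hs : 0 ≤ s) (hst : s ≤ t) :
    u + s • v ∈ Submodule.span ℝ≥0 {u, u + t • v} := by
  rcases hst.eq_or_lt with rfl | hst
  · exact Submodule.subset_span (Set.mem_insert_of_mem _ rfl)
  have ht : 0 < t := hs.trans_lt hst
  refine Submodule.mem_span_pair.2 ⟨((t - s) / t).toNNReal, (s / t).toNNReal, ?_⟩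
  rw [NNReal.smul_def, NNReal.smul_def,
    Real.coe_toNNReal _ (div_nonneg (sub_nonneg.2 hst.le) ht.le),
    Real.coe_toNNReal _ (div_nonneg hs ht.le)]
  match_scalars
  · field_simp
    ring
  · field_simp

theorem add_smul_mem_span_nnreal_direction {u v : M} {s t : ℝ} (hts : t ≤ s) :
    u + s • v ∈ Submodule.span ℝ≥0 {v, u + t • v} := by
  refine Submodule.mem_span_pair.2 ⟨(s - t).toNNReal, 1, ?_⟩
  rw [NNReal.smul_def, Real.coe_toNNReal _ (sub_nonneg.2 hts), one_smul]
  module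

end Cone

theorem InnerProductGeometry.angle_le_angle_of_mem_span_nnreal {E : Type*}
    [NormedAddCommGroup E] [InnerProductSpace ℝ E] {x y z : E} (hy : y ≠ 0)
    (h : y ∈ Submodule.span ℝ≥0 {x, z}) : angle y z ≤ angle x z := by
  rw [angle_eq_angle_add_add_angle_add_of_mem_span hy h]
  exact le_add_of_nonneg_left (angle_nonneg x y)

theorem angle_le_max_endpoints_on_ray {E : Type*} [NormedAddCommGroup E] [InnerProductSpace ℝ E]
    {a b : E} (h : LinearIndependent ℝ ![a, b]) :
    ∀ x y : ℝ, 0 ≤ x → 0 ≤ y →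
      angle (a + x • b) (a + y • b) ≤ max (angle a (a + y • b)) (angle b (a + y • b)) := by
  intro x y hx _
  have hne : a + x • b ≠ 0 := fun h0 =>
    one_ne_zero (LinearIndependent.pair_iff.1 h 1 x (by rwa [one_smul])).1
  rcases le_total x y with hxy | hyx
  · exact (angle_le_angle_of_mem_span_nnreal hne (add_smul_mem_span_nnreal_base hx hxy)).trans
      (le_max_left _ _)
  · exact (angle_le_angle_of_mem_span_nnreal hne (add_smul_mem_span_nnreal_direction hyx)).trans
      (le_max_right _ _)
end

section
/- (Lemma 1 of the paper.) Let E be a real inner product space and let a, b ∈ E be such that the origin does not belong to the segment [a, b] (the convex hull of {a, b}). Then for all x, y ∈ [a, b], the angle ∠(x, y) between the position vectors x and y satisfies ∠(x, y) ≤ ∠(a, b). -/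
/-!
A nonzero point `z` of the segment `[x, y]` is a nonnegative combination of `x` and `y`, so it
splits the angle: `∠(x, z) + ∠(z, y) = ∠(x, y)`. For `x, y ∈ [a, b]`, the triangle inequality
for angles through `a` and through `b` then gives
`2 ∠(x, y) ≤ ∠(x, a) + ∠(a, y) + ∠(x, b) + ∠(b, y) = 2 ∠(a, b)`.
-/

open InnerProductGeometry
open scoped NNReal

theorem mem_span_nnreal_pair_of_mem_segment {M : Type*} [AddCommGroup M] [Module ℝ M]
    {x y z : M} (h : z ∈ segment ℝ x y) : z ∈ Submodule.span ℝ≥0 {x, y} := by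
  obtain ⟨s, t, hs, ht, -, rfl⟩ := h
  exact Submodule.mem_span_pair.2 ⟨⟨s, hs⟩, ⟨t, ht⟩, rfl⟩

theorem InnerProductGeometry.angle_add_angle_eq_of_mem_segment {V : Type*}
    [NormedAddCommGroup V] [InnerProductSpace ℝ V] {x y z : V} (hz : z ≠ 0)
    (h : z ∈ segment ℝ x y) : angle x z + angle z y = angle x y :=
  (angle_eq_angle_add_add_angle_add_of_mem_span hz (mem_span_nnreal_pair_of_mem_segment h)).symm

theorem angle_le_angle_of_mem_segment {E : Type*} [NormedAddCommGroup E] [InnerProductSpace ℝ E]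
    {a b : E} (h : (0 : E) ∉ convexHull ℝ ({a, b} : Set E)) :
    ∀ x ∈ convexHull ℝ ({a, b} : Set E), ∀ y ∈ convexHull ℝ ({a, b} : Set E),
      angle x y ≤ angle a b := by
  rw [convexHull_pair] at h ⊢
  intro x hx y hy
  have hx₀ : x ≠ 0 := by rintro rfl; exact h hx
  have hy₀ : y ≠ 0 := by rintro rfl; exact h hy
  have split_at_x := angle_add_angle_eq_of_mem_segment hx₀ hx
  have split_at_y := angle_add_angle_eq_of_mem_segment hy₀ hy
  have via_a := angle_le_angle_add_angle x a y
  have via_b := angle_le_angle_add_angle x b y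
  rw [angle_comm x a] at via_a
  rw [angle_comm b y] at via_b
  linarith
end
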